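/- Assume the mesh functions (u_h)_{h>0} converge uniformly on compact subsets of Ω to a continuous convex function u : Ω → ℝ. Let K be compact and U open with K ⊂ U ⊆ Ū ⊂ Ω. Assume additionally: for every sequence h_k → 0, every subsequence (k_j), and every choice of nodes z_{k_j} ∈ N_{h_{k_j}} with z_{k_j} → z₀ ∈ ∂Ω, one has liminf_{j→∞} ũ(z_{k_j}) ≤ limsup_{j→∞} u_{h_{k_j}}(z_{k_j}), where ũ is the extension of u. Then for every sequence h_k → 0, the set ∂u(K) \ (⋃_{n} ⋂_{k ≥ n} ∂Γ(u_{h_k})(U ∩ conv(N_{h_k}))) has d-dimensional Lebesgue measure zero. -/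

import Mathlib

open Set MeasureTheory Filter Topology

noncomputable section

abbrev Euc (d : ℕ) := EuclideanSpace ℝ (Fin d)

/-- Subdifferential of `v` at `x` relative to the set `C`. -/
def subdiff {d : ℕ} (C : Set (Euc d)) (v : Euc d → ℝ) (x : Euc d) : Set (Euc d) :=
  {p | ∀ y ∈ C, v x + (inner ℝ p (y - x) : ℝ) ≤ v y}

/-- `⋃ x ∈ S, subdiff C v x`. -/
def subdiffSet {d : ℕ} (C : Set (Euc d)) (v : Euc d → ℝ) (S : Set (Euc d)) : Set (Euc d) :=
  ⋃ x ∈ S, subdiff C v x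

/-- The convex extension `ũ` of `u : Ω → ℝ` (may take the value `+∞`, hence `EReal`). -/
def extFun {d : ℕ} (Ω : Set (Euc d)) (u : Euc d → ℝ) (x : Euc d) : EReal :=
  ⨆ y ∈ Ω, ⨆ q ∈ subdiff Ω u y, ((u y + (inner ℝ q (x - y) : ℝ) : ℝ) : EReal)

/-- `χ_u(x)`: the subdifferential of the extension `ũ` at `x`. -/
def chiSub {d : ℕ} (Ω : Set (Euc d)) (u : Euc d → ℝ) (x : Euc d) : Set (Euc d) :=
  {p | ∀ z : Euc d, extFun Ω u x + (((inner ℝ p (z - x) : ℝ) : ℝ) : EReal) ≤ extFun Ω u z}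

def chiSubSet {d : ℕ} (Ω : Set (Euc d)) (u : Euc d → ℝ) (S : Set (Euc d)) : Set (Euc d) :=
  ⋃ x ∈ S, chiSub Ω u x

/-- The lattice `hℤ^d`. -/
def latt (d : ℕ) (h : ℝ) : Set (Euc d) := {x | ∀ i, ∃ m : ℤ, x i = m * h}

/-- `Ω_h = Ω ∩ hℤ^d`. -/
def meshΩ {d : ℕ} (Ω : Set (Euc d)) (h : ℝ) : Set (Euc d) := Ω ∩ latt d h

/-- An integer direction `e ∈ ℤ^d` as a vector of `ℝ^d`. -/
def intVec {d : ℕ} (e : Fin d → ℤ) : Euc d :=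
  (EuclideanSpace.equiv (Fin d) ℝ).symm (fun i => (e i : ℝ))

/-- `h^e_x = sup { r h : r ∈ [0,1], x + r h e ∈ closure Ω }`. -/
def hev {d : ℕ} (Ω : Set (Euc d)) (h : ℝ) (x : Euc d) (e : Fin d → ℤ) : ℝ :=
  sSup {t | ∃ r ∈ Icc (0:ℝ) 1, t = r * h ∧ x + (r * h) • intVec e ∈ closure Ω}

/-- The boundary nodes `∂Ω_h` for the direction set `V`. -/
def meshBd {d : ℕ} (Ω : Set (Euc d)) (h : ℝ) (V : Set (Fin d → ℤ)) : Set (Euc d) :=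
  {x ∈ frontier Ω | ∃ y ∈ meshΩ Ω h, ∃ e ∈ V, x = y + hev Ω h y e • intVec e}

/-- The convex envelope of `u` with constraints on `N`:
`Γ(u)(x) = sup {L x : L affine, L ≤ u on N}`. -/
def convEnv {d : ℕ} (N : Set (Euc d)) (u : Euc d → ℝ) (x : Euc d) : ℝ :=
  sSup {t | ∃ (p : Euc d) (c : ℝ),
    (∀ y ∈ N, (inner ℝ p y : ℝ) + c ≤ u y) ∧ t = (inner ℝ p x : ℝ) + c}

/-- The second difference operator `Δ_e u_h (x)`. -/
def deltaE {d : ℕ} (Ω : Set (Euc d)) (h : ℝ) (u : Euc d → ℝ) (e : Fin d → ℤ)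
    (x : Euc d) : ℝ :=
  2 / (hev Ω h x e + hev Ω h x (-e)) *
    ((u (x + hev Ω h x e • intVec e) - u x) / hev Ω h x e +
     (u (x + hev Ω h x (-e) • intVec (-e)) - u x) / hev Ω h x (-e))

/-- Discrete convexity with the full set of directions `e ∈ ℤ^d \ {0}`. -/
def DiscConvex {d : ℕ} (Ω : Set (Euc d)) (h : ℝ) (u : Euc d → ℝ) : Prop :=
  ∀ x ∈ meshΩ Ω h, ∀ e : Fin d → ℤ, e ≠ 0 → 0 ≤ deltaE Ω h u e x

/-!
Let `u*` be the convex conjugate of `u` restricted to `Ω` (`conjOn Ω u`). Since `Ω` is bounded,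
`u*` is Lipschitz, so by Rademacher's theorem it is differentiable off a null set, and at such a
slope `p` its subdifferential `∂u*(p)` is a single point. Take `p ∈ ∂u(x₀)` with `x₀ ∈ K`; then
`∂u*(p) = {x₀}`. If `p` missed `∂Γ(u_{h_k})(U ∩ conv N_{h_k})` for infinitely many `k`, the nodes
minimising `u_{h_k} - ⟪p, ·⟫`, at which `p` is a subgradient of the convex envelope, would lie
outside `U`, and a subsequence would converge to some `x ∉ U`. Local uniform convergence bounds
`limsup u_{h_k}` at these nodes above by `u z - ⟪p, z - x⟫` for every `z ∈ Ω`, and below by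
`u**(x)`: directly when `x ∈ Ω`, and through the boundary condition and `ũ ≥ u**` on `closure Ω`
when `x ∈ ∂Ω`. Together these bounds say `x ∈ ∂u*(p)`, so `x = x₀ ∈ U`, a contradiction.
-/

open scoped RealInnerProductSpace

variable {d : ℕ}

theorem exists_mem_subdiff {Ω : Set (Euc d)} {u : Euc d → ℝ} (hop : IsOpen Ω)
    (huc : ContinuousOn u Ω) (hucv : ConvexOn ℝ Ω u) {y : Euc d} (hy : y ∈ Ω) :
    (subdiff Ω u y).Nonempty := by
  set E : Set (Euc d × ℝ) := {q | q.1 ∈ Ω ∧ u q.1 < q.2}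
  have hEopen : IsOpen E := by
    have := (continuousOn_snd.sub (huc.comp continuousOn_fst fun q hq => hq)).isOpen_inter_preimage
      (hop.preimage continuous_fst) (isOpen_Ioi (a := 0))
    convert this using 1
    ext q
    exact and_congr Iff.rfl sub_pos.symm
  obtain ⟨f, hf⟩ := geometric_hahn_banach_open_point hucv.convex_strict_epigraph hEopen
    (x := (y, u y)) (by simp)
  set g := f.comp (ContinuousLinearMap.inl ℝ (Euc d) ℝ)
  set β := f (0, 1)
  have hf_apply : ∀ z t, f (z, t) = g z + t * β := fun z t => by
    have : ((z, t) : Euc d × ℝ) = (z, 0) + t • (0, 1) := by simp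
    rw [this, map_add, map_smul, smul_eq_mul]
    rfl
  have hβ : β < 0 := by
    have := hf (y, u y + 1) ⟨hy, by linarith⟩
    rw [hf_apply, hf_apply] at this
    linarith
  -- letting `t ↓ u z` in `f (z, t) < f (y, u y)`
  have hsupp : ∀ z ∈ Ω, g z + u z * β ≤ g y + u y * β := fun z hz =>
    le_of_forall_pos_lt_add fun ε hε => by
      have := hf (z, u z + ε / -β) ⟨hz, by linarith [div_pos hε (neg_pos.2 hβ)]⟩
      have hεβ : ε / -β * β = -ε := by field_simp [hβ.ne]
      rw [hf_apply, hf_apply, add_mul, hεβ] at this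
      linarith
  refine ⟨(-β)⁻¹ • (InnerProductSpace.toDual ℝ (Euc d)).symm g, fun z hz => ?_⟩
  rw [real_inner_smul_left, InnerProductSpace.toDual_symm_apply, map_sub]
  have : (-β)⁻¹ * (g z - g y) ≤ u z - u y := by
    rw [inv_mul_le_iff₀ (neg_pos.2 hβ)]
    nlinarith [hsupp z hz]
  linarith

def conjOn (Ω : Set (Euc d)) (u : Euc d → ℝ) (q : Euc d) : ℝ :=
  sSup ((fun z => ⟪q, z⟫ - u z) '' Ω)

section Conjugate

variable {Ω : Set (Euc d)} {u : Euc d → ℝ}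

theorem bddAbove_image_inner_sub_of_mem_subdiff (hbd : Bornology.IsBounded Ω) {p x : Euc d}
    (hp : p ∈ subdiff Ω u x) (q : Euc d) : BddAbove ((fun z => ⟪q, z⟫ - u z) '' Ω) := by
  obtain ⟨R, hR⟩ := hbd.subset_closedBall 0
  refine ⟨‖q - p‖ * R + ⟪p, x⟫ - u x, ?_⟩
  rintro _ ⟨z, hz, rfl⟩
  have hsupp := hp z hz
  have hnorm : ‖z‖ ≤ R := mem_closedBall_zero_iff.1 (hR hz)
  have : ⟪q - p, z⟫ ≤ ‖q - p‖ * R :=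
    (real_inner_le_norm _ _).trans (mul_le_mul_of_nonneg_left hnorm (norm_nonneg _))
  rw [inner_sub_left] at this
  rw [inner_sub_right] at hsupp
  linarith

theorem le_conjOn (hbdd : ∀ q, BddAbove ((fun z => ⟪q, z⟫ - u z) '' Ω)) (q : Euc d) {z : Euc d}
    (hz : z ∈ Ω) : ⟪q, z⟫ - u z ≤ conjOn Ω u q :=
  le_csSup (hbdd q) ⟨z, hz, rfl⟩

theorem conjOn_le (hne : Ω.Nonempty) {q : Euc d} {M : ℝ} (h : ∀ z ∈ Ω, ⟪q, z⟫ - u z ≤ M) :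
    conjOn Ω u q ≤ M :=
  csSup_le (hne.image _) (forall_mem_image.2 h)

theorem lipschitzWith_conjOn (hne : Ω.Nonempty)
    (hbdd : ∀ q, BddAbove ((fun z => ⟪q, z⟫ - u z) '' Ω)) {R : ℝ}
    (hR : Ω ⊆ Metric.closedBall 0 R) : LipschitzWith R.toNNReal (conjOn Ω u) := by
  refine LipschitzWith.of_le_add_mul' R fun q q' => conjOn_le hne fun z hz => ?_
  have hnorm : ‖z‖ ≤ R := mem_closedBall_zero_iff.1 (hR hz)
  have : ⟪q - q', z⟫ ≤ R * dist q q' := by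
    rw [dist_eq_norm, mul_comm]
    exact (real_inner_le_norm _ _).trans (mul_le_mul_of_nonneg_left hnorm (norm_nonneg _))
  rw [inner_sub_left] at this
  linarith [le_conjOn hbdd q' hz]

theorem subdiff_subsingleton_of_differentiableAt {C : Set (Euc d)} {v : Euc d → ℝ} {p : Euc d}
    (hC : C ∈ 𝓝 p) (hv : DifferentiableAt ℝ v p) : (subdiff C v p).Subsingleton := by
  -- a subgradient `x` makes `p` a local minimum of `v - ⟪x, ·⟫`
  have hgrad : ∀ x ∈ subdiff C v p, innerSL ℝ x = fderiv ℝ v p := fun x hx => by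
    have hmin : IsLocalMin (fun w => v w - ⟪x, w⟫) p :=
      Filter.mem_of_superset hC fun w hw => by
        have := hx w hw
        rw [inner_sub_right] at this
        simp only [mem_ofPred_eq]
        linarith
    exact (sub_eq_zero.1 (hmin.hasFDerivAt_eq_zero
      (hv.hasFDerivAt.sub (innerSL ℝ x).hasFDerivAt))).symm
  intro x hx y hy
  refine ext_inner_right ℝ fun w => ?_
  rw [← innerSL_apply_apply ℝ, ← innerSL_apply_apply ℝ y, hgrad x hx, hgrad y hy]

theorem mem_subdiff_conjOn_of_le_of_le (hne : Ω.Nonempty) {p x : Euc d} {c : EReal}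
    (hup : ∀ z ∈ Ω, c ≤ ((u z - ⟪p, z - x⟫ : ℝ) : EReal))
    (hlow : ∀ q, ((⟪q, x⟫ - conjOn Ω u q : ℝ) : EReal) ≤ c) :
    x ∈ subdiff univ (conjOn Ω u) p := by
  obtain ⟨z, hz⟩ := hne
  induction c using EReal.rec with
  | bot => exact absurd (le_bot_iff.1 (hlow 0)) (EReal.coe_ne_bot _)
  | top => exact absurd (top_le_iff.1 (hup z hz)) (EReal.coe_ne_top _)
  | coe c =>
    simp only [EReal.coe_le_coe_iff] at hup hlow
    have hp : conjOn Ω u p ≤ ⟪p, x⟫ - c := conjOn_le ⟨z, hz⟩ fun w hw => by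
      have := hup w hw
      rw [inner_sub_right] at this
      linarith
    intro q _
    rw [inner_sub_right, real_inner_comm q x, real_inner_comm p x]
    linarith [hlow q]

theorem mem_subdiff_conjOn_of_mem_subdiff
    (hbdd : ∀ q, BddAbove ((fun z => ⟪q, z⟫ - u z) '' Ω)) {p x : Euc d} (hx : x ∈ Ω)
    (hp : p ∈ subdiff Ω u x) : x ∈ subdiff univ (conjOn Ω u) p :=
  mem_subdiff_conjOn_of_le_of_le ⟨x, hx⟩ (c := u x)
    (fun z hz => EReal.coe_le_coe_iff.2 (by linarith [hp z hz]))
    (fun q => EReal.coe_le_coe_iff.2 (by linarith [le_conjOn hbdd q hx]))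

theorem le_extFun_of_mem_subdiff {x y q : Euc d} (hy : y ∈ Ω) (hq : q ∈ subdiff Ω u y) :
    ((u y + ⟪q, x - y⟫ : ℝ) : EReal) ≤ extFun Ω u x :=
  le_iSup₂_of_le y hy (le_iSup₂_of_le q hq le_rfl)

theorem inner_sub_conjOn_le_extFun (hop : IsOpen Ω) (huc : ContinuousOn u Ω)
    (hucv : ConvexOn ℝ Ω u) (hbdd : ∀ q, BddAbove ((fun z => ⟪q, z⟫ - u z) '' Ω))
    {x : Euc d} (hx : x ∈ closure Ω) (q : Euc d) :
    ((⟪q, x⟫ - conjOn Ω u q : ℝ) : EReal) ≤ extFun Ω u x := by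
  obtain ⟨w, hw⟩ := closure_nonempty_iff.1 ⟨x, hx⟩
  set z : ℝ → Euc d := fun t => x + t • (w - x)
  set a : ℝ → ℝ := fun t => (⟪q, z t⟫ - conjOn Ω u q - t * u w) / (1 - t)
  -- the supporting hyperplane of `u` at `z t`, evaluated at `x` and at `w`
  have hsupp : ∀ t ∈ Ioo (0 : ℝ) 1, (a t : EReal) ≤ extFun Ω u x := by
    rintro t ⟨ht0, ht1⟩
    have hzt : z t ∈ Ω := by
      simpa [hop.interior_eq] using
        hucv.1.add_smul_sub_mem_interior' hx (hop.interior_eq.symm ▸ hw) ⟨ht0, ht1.le⟩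
    obtain ⟨r, hr⟩ := exists_mem_subdiff hop huc hucv hzt
    refine le_trans (EReal.coe_le_coe_iff.2 ?_) (le_extFun_of_mem_subdiff hzt hr)
    have hw' := hr w hw
    have hx_sub : x - z t = (-t) • (w - x) := by simp [z]
    have hw_sub : w - z t = (1 - t) • (w - x) := by simp only [z]; module
    rw [hx_sub, real_inner_smul_right]
    rw [hw_sub, real_inner_smul_right] at hw'
    rw [div_le_iff₀ (by linarith)]
    nlinarith [le_conjOn hbdd q hzt]
  have hlim : Tendsto (fun t => (a t : EReal)) (𝓝[>] 0)
      (𝓝 ((⟪q, x⟫ - conjOn Ω u q : ℝ) : EReal)) := by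
    have ha : ContinuousAt a 0 := by fun_prop (disch := norm_num)
    have ha0 : a 0 = ⟪q, x⟫ - conjOn Ω u q := by simp [a, z]
    rw [← ha0]
    exact (continuous_coe_real_ereal.tendsto _).comp (ha.tendsto.mono_left nhdsWithin_le_nhds)
  exact le_of_tendsto hlim (eventually_of_mem (Ioo_mem_nhdsGT one_pos) hsupp)

end Conjugate

def latticeRound (h : ℝ) (x : Euc d) : Euc d :=
  (EuclideanSpace.equiv (Fin d) ℝ).symm fun i => h * round (x i / h)

theorem latticeRound_mem_latt (h : ℝ) (x : Euc d) : latticeRound h x ∈ latt d h :=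
  fun i => ⟨round (x i / h), mul_comm _ _⟩

theorem tendsto_latticeRound {ι : Type*} {l : Filter ι} {s : ι → ℝ} (hs : ∀ j, s j ≠ 0)
    (hs0 : Tendsto s l (𝓝 0)) (x : Euc d) : Tendsto (fun j => latticeRound (s j) x) l (𝓝 x) := by
  have hcoord : ∀ i, Tendsto (fun j => s j * round (x i / s j)) l (𝓝 (x i)) := fun i => by
    rw [tendsto_iff_norm_sub_tendsto_zero]
    refine squeeze_zero (fun _ => norm_nonneg _) (fun j => ?_) (by simpa using hs0.norm.div_const 2)
    have hround := abs_sub_round (x i / s j)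
    calc ‖s j * round (x i / s j) - x i‖ = |s j| * |x i / s j - round (x i / s j)| := by
          rw [Real.norm_eq_abs, ← abs_mul, abs_sub_comm, mul_sub, mul_div_cancel₀ _ (hs j)]
      _ ≤ ‖s j‖ / 2 := by rw [Real.norm_eq_abs]; nlinarith [abs_nonneg (s j)]
  exact ((EuclideanSpace.equiv (Fin d) ℝ).symm.continuous.tendsto _).comp (tendsto_pi_nhds.2 hcoord)

theorem meshΩ_finite {Ω : Set (Euc d)} (hbd : Bornology.IsBounded Ω) {h : ℝ} (hh : 0 < h) :
    (meshΩ Ω h).Finite := by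
  obtain ⟨R, hR⟩ := hbd.subset_closedBall 0
  set M := ⌈R / h⌉
  have hsub : meshΩ Ω h ⊆ (fun m : Fin d → ℤ => (EuclideanSpace.equiv (Fin d) ℝ).symm
      fun i => (m i : ℝ) * h) '' univ.pi fun _ => Icc (-M) M := by
    rintro x ⟨hxΩ, hxl⟩
    choose m hm using hxl
    refine ⟨m, fun i _ => abs_le.1 ?_, by ext i; exact (hm i).symm⟩
    have hmR : |(m i : ℝ)| * h ≤ R := by
      rw [← abs_of_pos hh, ← abs_mul, ← hm i]
      exact (PiLp.norm_apply_le x i).trans (mem_closedBall_zero_iff.1 (hR hxΩ))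
    have : ((|m i| : ℤ) : ℝ) ≤ M := by
      push_cast
      exact ((le_div_iff₀ hh).2 hmR).trans (Int.le_ceil _)
    exact_mod_cast this
  exact ((Set.Finite.pi fun _ => Set.finite_Icc (-M) M).image _).subset hsub

theorem eventually_meshΩ_nonempty {Ω : Set (Euc d)} (hop : IsOpen Ω) (hne : Ω.Nonempty)
    {ι : Type*} {l : Filter ι} {s : ι → ℝ} (hs : ∀ j, s j ≠ 0) (hs0 : Tendsto s l (𝓝 0)) :
    ∀ᶠ j in l, (meshΩ Ω (s j)).Nonempty := by
  obtain ⟨w, hw⟩ := hne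
  filter_upwards [(tendsto_latticeRound hs hs0 w).eventually (hop.mem_nhds hw)] with j hj
  exact ⟨_, hj, latticeRound_mem_latt _ _⟩

def TendstoLocallyUniformlyOnNodes (N : ℝ → Set (Euc d)) (uh : ℝ → Euc d → ℝ)
    (u : Euc d → ℝ) (Ω : Set (Euc d)) : Prop :=
  ∀ K : Set (Euc d), IsCompact K → K ⊆ Ω → ∀ ε : ℝ, 0 < ε →
    ∃ h₀ : ℝ, 0 < h₀ ∧ ∀ h : ℝ, 0 < h → h < h₀ → ∀ x ∈ N h ∩ K, |uh h x - u x| < ε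

section Nodes

variable {Ω : Set (Euc d)} {u : Euc d → ℝ} {N : ℝ → Set (Euc d)} {uh : ℝ → Euc d → ℝ}

theorem TendstoLocallyUniformlyOnNodes.tendsto_comp
    (hcvg : TendstoLocallyUniformlyOnNodes N uh u Ω) (hop : IsOpen Ω) (huc : ContinuousOn u Ω)
    {ι : Type*} {l : Filter ι} {s : ι → ℝ} (hs : ∀ j, 0 < s j) (hs0 : Tendsto s l (𝓝 0))
    {W : ι → Euc d} {x : Euc d} (hWN : ∀ᶠ j in l, W j ∈ N (s j)) (hWx : Tendsto W l (𝓝 x))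
    (hx : x ∈ Ω) : Tendsto (fun j => uh (s j) (W j)) l (𝓝 (u x)) := by
  obtain ⟨K, hK, hxK, hKΩ⟩ := exists_compact_subset hop hx
  have herr : Tendsto (fun j => uh (s j) (W j) - u (W j)) l (𝓝 0) := by
    refine Metric.tendsto_nhds.2 fun ε hε => ?_
    obtain ⟨h₀, hh₀, hconv⟩ := hcvg K hK hKΩ ε hε
    filter_upwards [hs0.eventually (gt_mem_nhds hh₀), hWN,
      hWx.eventually (mem_interior_iff_mem_nhds.1 hxK)] with j hj hWj hWK
    simpa [Real.dist_eq] using hconv _ (hs j) hj _ ⟨hWj, hWK⟩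
  simpa using herr.add ((huc.continuousAt (hop.mem_nhds hx)).tendsto.comp hWx)

theorem limsup_le_of_isMinOn (hcvg : TendstoLocallyUniformlyOnNodes N uh u Ω) (hop : IsOpen Ω)
    (huc : ContinuousOn u Ω) (hmesh : ∀ h, meshΩ Ω h ⊆ N h) {s : ℕ → ℝ} (hs : ∀ j, 0 < s j)
    (hs0 : Tendsto s atTop (𝓝 0)) {p x : Euc d} {Y : ℕ → Euc d} (hY : Tendsto Y atTop (𝓝 x))
    (hmin : ∀ j, IsMinOn (fun z => uh (s j) z - ⟪p, z⟫) (N (s j)) (Y j)) {z : Euc d}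
    (hz : z ∈ Ω) :
    limsup (fun j => (uh (s j) (Y j) : EReal)) atTop ≤ ((u z - ⟪p, z - x⟫ : ℝ) : EReal) := by
  set Z := fun j => latticeRound (s j) z
  have hZ : Tendsto Z atTop (𝓝 z) := tendsto_latticeRound (fun j => (hs j).ne') hs0 z
  have hZN : ∀ᶠ j in atTop, Z j ∈ N (s j) := (hZ.eventually (hop.mem_nhds hz)).mono
    fun j hj => hmesh _ ⟨hj, latticeRound_mem_latt _ _⟩
  have hbound : Tendsto (fun j => uh (s j) (Z j) - ⟪p, Z j - Y j⟫) atTop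
      (𝓝 (u z - ⟪p, z - x⟫)) :=
    (hcvg.tendsto_comp hop huc hs hs0 hZN hZ hz).sub (tendsto_const_nhds.inner (hZ.sub hY))
  calc limsup (fun j => (uh (s j) (Y j) : EReal)) atTop
      ≤ limsup (fun j => ((uh (s j) (Z j) - ⟪p, Z j - Y j⟫ : ℝ) : EReal)) atTop :=
        limsup_le_limsup (hZN.mono fun j hj => EReal.coe_le_coe_iff.2 (by
          have := isMinOn_iff.1 (hmin j) _ hj
          rw [inner_sub_right]
          linarith))
    _ = ((u z - ⟪p, z - x⟫ : ℝ) : EReal) :=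
        (EReal.tendsto_coe.2 hbound).limsup_eq

theorem mem_subdiff_conjOn_of_isMinOn (hcvg : TendstoLocallyUniformlyOnNodes N uh u Ω)
    (hop : IsOpen Ω) (huc : ContinuousOn u Ω) (hucv : ConvexOn ℝ Ω u)
    (hbdd : ∀ q, BddAbove ((fun z => ⟪q, z⟫ - u z) '' Ω)) (hmesh : ∀ h, meshΩ Ω h ⊆ N h)
    {s : ℕ → ℝ} (hs : ∀ j, 0 < s j) (hs0 : Tendsto s atTop (𝓝 0)) {p x : Euc d}
    {Y : ℕ → Euc d} (hYN : ∀ j, Y j ∈ N (s j)) (hYΩ : ∀ j, Y j ∈ closure Ω)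
    (hY : Tendsto Y atTop (𝓝 x))
    (hmin : ∀ j, IsMinOn (fun z => uh (s j) z - ⟪p, z⟫) (N (s j)) (Y j))
    (hbc : x ∈ frontier Ω → liminf (fun j => extFun Ω u (Y j)) atTop ≤
      limsup (fun j => (uh (s j) (Y j) : EReal)) atTop) :
    x ∈ subdiff univ (conjOn Ω u) p := by
  have hxΩ : x ∈ closure Ω := isClosed_closure.mem_of_tendsto hY (Eventually.of_forall hYΩ)
  refine mem_subdiff_conjOn_of_le_of_le (closure_nonempty_iff.1 ⟨x, hxΩ⟩)
    (fun z hz => limsup_le_of_isMinOn hcvg hop huc hmesh hs hs0 hY hmin hz) fun q => ?_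
  by_cases hx : x ∈ Ω
  · have hlim : Tendsto (fun j => (uh (s j) (Y j) : EReal)) atTop (𝓝 (u x : EReal)) :=
      EReal.tendsto_coe.2 (hcvg.tendsto_comp hop huc hs hs0 (Eventually.of_forall hYN) hY hx)
    rw [hlim.limsup_eq]
    exact EReal.coe_le_coe_iff.2 (by linarith [le_conjOn hbdd q hx])
  · have hxfr : x ∈ frontier Ω := by
      rw [frontier, hop.interior_eq]
      exact ⟨hxΩ, hx⟩
    have hlim : Tendsto (fun j => ((⟪q, Y j⟫ - conjOn Ω u q : ℝ) : EReal)) atTop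
        (𝓝 ((⟪q, x⟫ - conjOn Ω u q : ℝ) : EReal)) :=
      EReal.tendsto_coe.2 ((tendsto_const_nhds.inner hY).sub tendsto_const_nhds)
    calc ((⟪q, x⟫ - conjOn Ω u q : ℝ) : EReal)
        = liminf (fun j => ((⟪q, Y j⟫ - conjOn Ω u q : ℝ) : EReal)) atTop := hlim.liminf_eq.symm
      _ ≤ liminf (fun j => extFun Ω u (Y j)) atTop := liminf_le_liminf (Eventually.of_forall
          fun j => inner_sub_conjOn_le_extFun hop huc hucv hbdd (hYΩ j) q)
      _ ≤ _ := hbc hxfr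

end Nodes

theorem mem_subdiff_convEnv_of_isMinOn {N : Set (Euc d)} (hN : N.Finite) {v : Euc d → ℝ}
    {p y : Euc d} (hy : y ∈ N) (hmin : IsMinOn (fun z => v z - ⟪p, z⟫) N y) :
    p ∈ subdiff (convexHull ℝ N) (convEnv N v) y := by
  set c := v y - ⟪p, y⟫
  have hadm : ∀ z ∈ N, ⟪p, z⟫ + c ≤ v z := fun z hz => by
    linarith [isMinOn_iff.1 hmin z hz]
  obtain ⟨M, hM⟩ := (hN.image v).bddAbove
  -- an affine minorant of `v` on `N` stays below `max v` on the convex hull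
  have hbdd : ∀ z ∈ convexHull ℝ N, BddAbove {t | ∃ (p' : Euc d) (c' : ℝ),
      (∀ y ∈ N, ⟪p', y⟫ + c' ≤ v y) ∧ t = ⟪p', z⟫ + c'} := fun z hz => ⟨M, by
    rintro _ ⟨p', c', hp', rfl⟩
    have : z ∈ {w | ⟪p', w⟫ ≤ M - c'} :=
      convexHull_min (fun y hy => le_sub_iff_add_le.2 ((hp' y hy).trans (hM ⟨y, hy, rfl⟩)))
        (convex_halfSpace_le (innerₛₗ ℝ p').isLinear _) hz
    exact le_sub_iff_add_le.1 this⟩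
  intro z hz
  have hz_le : ⟪p, z⟫ + c ≤ convEnv N v z := le_csSup (hbdd z hz) ⟨p, c, hadm, rfl⟩
  have hy_le : convEnv N v y ≤ v y :=
    csSup_le ⟨_, p, c, hadm, rfl⟩ (by rintro _ ⟨p', c', hp', rfl⟩; exact hp' y hy)
  rw [inner_sub_right]
  linarith

theorem eventually_mem_subdiffSet_convEnv {Ω : Set (Euc d)} (hop : IsOpen Ω)
    (hbd : Bornology.IsBounded Ω) {B : ℝ → Set (Euc d)}
    (hB : ∀ h : ℝ, 0 < h → (B h).Finite ∧ B h ⊆ frontier Ω) {u : Euc d → ℝ}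
    (huc : ContinuousOn u Ω) (hucv : ConvexOn ℝ Ω u) {uh : ℝ → Euc d → ℝ}
    (hcvg : TendstoLocallyUniformlyOnNodes (fun h => meshΩ Ω h ∪ B h) uh u Ω)
    {U : Set (Euc d)} (hU : IsOpen U) {hk : ℕ → ℝ} (hkpos : ∀ k, 0 < hk k)
    (hk0 : Tendsto hk atTop (𝓝 0))
    (hbc : ∀ φ : ℕ → ℕ, StrictMono φ →
      ∀ z : ℕ → Euc d, (∀ j, z j ∈ meshΩ Ω (hk (φ j)) ∪ B (hk (φ j))) →
      ∀ z₀ ∈ frontier Ω, Tendsto z atTop (𝓝 z₀) →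
        liminf (fun j => extFun Ω u (z j)) atTop ≤
          limsup (fun j => ((uh (hk (φ j)) (z j) : ℝ) : EReal)) atTop)
    {p x₀ : Euc d} (hx₀U : x₀ ∈ U) (hx₀ : x₀ ∈ Ω) (hp : p ∈ subdiff Ω u x₀)
    (hdiff : DifferentiableAt ℝ (conjOn Ω u) p) :
    ∀ᶠ k in atTop, p ∈ subdiffSet (convexHull ℝ (meshΩ Ω (hk k) ∪ B (hk k)))
      (convEnv (meshΩ Ω (hk k) ∪ B (hk k)) (uh (hk k)))
      (U ∩ convexHull ℝ (meshΩ Ω (hk k) ∪ B (hk k))) := by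
  set N := fun k => meshΩ Ω (hk k) ∪ B (hk k)
  have hbdd := bddAbove_image_inner_sub_of_mem_subdiff hbd hp
  have hNfin : ∀ k, (N k).Finite := fun k =>
    (meshΩ_finite hbd (hkpos k)).union (hB _ (hkpos k)).1
  by_contra hbad
  obtain ⟨φ, hφ, hφbad⟩ := extraction_of_frequently_atTop ((not_eventually.1 hbad).and_eventually
    (eventually_meshΩ_nonempty hop ⟨x₀, hx₀⟩ (fun k => (hkpos k).ne') hk0))
  have hargmin : ∀ j, ∃ y ∈ N (φ j), IsMinOn (fun z => uh (hk (φ j)) z - ⟪p, z⟫) (N (φ j)) y :=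
    fun j =>
      have ⟨y, hy, hmin⟩ :=
        (N (φ j)).exists_min_image _ (hNfin _) ((hφbad j).2.mono subset_union_left)
      ⟨y, hy, isMinOn_iff.2 hmin⟩
  choose y hyN hymin using hargmin
  -- a minimising node carries `p` as a subgradient of the envelope, so it must lie outside `U`
  have hyU : ∀ j, y j ∉ U := fun j hyU => (hφbad j).1 (mem_biUnion ⟨hyU,
    subset_convexHull ℝ _ (hyN j)⟩ (mem_subdiff_convEnv_of_isMinOn (hNfin _) (hyN j) (hymin j)))
  have hyΩ : ∀ j, y j ∈ closure Ω := fun j => (hyN j).elim (fun h => subset_closure h.1)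
    fun h => frontier_subset_closure ((hB _ (hkpos _)).2 h)
  obtain ⟨x, -, ψ, hψ, hyx⟩ := hbd.isCompact_closure.tendsto_subseq hyΩ
  have hxU : x ∉ U :=
    hU.isClosed_compl.mem_of_tendsto hyx (Eventually.of_forall fun j => hyU (ψ j))
  have hx := mem_subdiff_conjOn_of_isMinOn hcvg hop huc hucv hbdd (fun _ => subset_union_left)
    (s := fun j => hk (φ (ψ j))) (fun j => hkpos _) (hk0.comp (hφ.comp hψ).tendsto_atTop)
    (fun j => hyN (ψ j)) (fun j => hyΩ (ψ j)) hyx (fun j => hymin (ψ j))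
    (hbc _ (hφ.comp hψ) _ (fun j => hyN (ψ j)) x · hyx)
  exact hxU (subdiff_subsingleton_of_differentiableAt univ_mem hdiff hx
    (mem_subdiff_conjOn_of_mem_subdiff hbdd hx₀ hp) ▸ hx₀U)

theorem statement12_general {d : ℕ} (Ω : Set (Euc d))
    (hne : Ω.Nonempty) (hbd : Bornology.IsBounded Ω) (hop : IsOpen Ω)
    (B : ℝ → Set (Euc d)) (hB : ∀ h : ℝ, 0 < h → (B h).Finite ∧ B h ⊆ frontier Ω)
    (u : Euc d → ℝ) (huc : ContinuousOn u Ω) (hucv : ConvexOn ℝ Ω u)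
    (uh : ℝ → Euc d → ℝ)
    (hcvg : ∀ K : Set (Euc d), IsCompact K → K ⊆ Ω → ∀ ε : ℝ, 0 < ε →
      ∃ h₀ : ℝ, 0 < h₀ ∧ ∀ h : ℝ, 0 < h → h < h₀ →
        ∀ x ∈ (meshΩ Ω h ∪ B h) ∩ K, |uh h x - u x| < ε)
    (K : Set (Euc d))
    (U : Set (Euc d)) (hU : IsOpen U) (hKU : K ⊆ U) (hUΩ : closure U ⊆ Ω)
    (hbc : ∀ hk : ℕ → ℝ, (∀ k, 0 < hk k) → Tendsto hk atTop (𝓝 0) →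
      ∀ φ : ℕ → ℕ, StrictMono φ →
      ∀ z : ℕ → Euc d, (∀ j, z j ∈ meshΩ Ω (hk (φ j)) ∪ B (hk (φ j))) →
      ∀ z₀ ∈ frontier Ω, Tendsto z atTop (𝓝 z₀) →
        Filter.liminf (fun j => extFun Ω u (z j)) atTop ≤
          Filter.limsup (fun j => ((uh (hk (φ j)) (z j) : ℝ) : EReal)) atTop) :
    ∀ hk : ℕ → ℝ, (∀ k, 0 < hk k) → Tendsto hk atTop (𝓝 0) →
    volume ((⋃ x ∈ K, subdiff Ω u x) \
      (⋃ n : ℕ, ⋂ k ∈ Ici n, ⋃ x ∈ U ∩ convexHull ℝ (meshΩ Ω (hk k) ∪ B (hk k)),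
        subdiff (convexHull ℝ (meshΩ Ω (hk k) ∪ B (hk k)))
          (convEnv (meshΩ Ω (hk k) ∪ B (hk k)) (uh (hk k))) x)) = 0 := by
  intro hk hkpos hk0
  obtain ⟨w, hw⟩ := hne
  obtain ⟨p₀, hp₀⟩ := exists_mem_subdiff hop huc hucv hw
  have hbdd := bddAbove_image_inner_sub_of_mem_subdiff hbd hp₀
  obtain ⟨R, hR⟩ := hbd.subset_closedBall 0
  have hnull : volume {p | ¬ DifferentiableAt ℝ (conjOn Ω u) p} = 0 :=
    ae_iff.1 (lipschitzWith_conjOn ⟨w, hw⟩ hbdd hR).ae_differentiableAt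
  refine measure_mono_null ?_ hnull
  rintro p ⟨hpK, hpA⟩ hdiff
  obtain ⟨x₀, hx₀K, hp⟩ := mem_iUnion₂.1 hpK
  obtain ⟨n, hn⟩ := eventually_atTop.1 (eventually_mem_subdiffSet_convEnv hop hbd hB huc hucv
    hcvg hU hkpos hk0 (hbc hk hkpos hk0) (hKU hx₀K) (hUΩ (subset_closure (hKU hx₀K))) hp hdiff)
  exact hpA (mem_iUnion.2 ⟨n, mem_iInter₂.2 hn⟩)

/-- if `u_h → u` uniformly on compact subsets of `Ω` with `u` continuous
convex, `K ⊂ U ⊆ closure U ⊂ Ω` with `K` compact and `U` open, and the boundary condition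
`liminf ũ(z_{k_j}) ≤ limsup u_{h_{k_j}}(z_{k_j})` holds for all node sequences converging to a
boundary point, then, for any sequence `h_k → 0`, the set
`∂u(K) \ (⋃ n, ⋂ k ≥ n, ∂Γ(u_{h_k})(U ∩ conv N_{h_k}))` is Lebesgue-null. -/
theorem statement12 {d : ℕ} (hd : 1 ≤ d) (Ω : Set (Euc d))
    (hne : Ω.Nonempty) (hbd : Bornology.IsBounded Ω) (hop : IsOpen Ω) (hcv : Convex ℝ Ω)
    (B : ℝ → Set (Euc d)) (hB : ∀ h : ℝ, 0 < h → (B h).Finite ∧ B h ⊆ frontier Ω)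
    (u : Euc d → ℝ) (huc : ContinuousOn u Ω) (hucv : ConvexOn ℝ Ω u)
    (uh : ℝ → Euc d → ℝ)
    (hcvg : ∀ K : Set (Euc d), IsCompact K → K ⊆ Ω → ∀ ε : ℝ, 0 < ε →
      ∃ h₀ : ℝ, 0 < h₀ ∧ ∀ h : ℝ, 0 < h → h < h₀ →
        ∀ x ∈ (meshΩ Ω h ∪ B h) ∩ K, |uh h x - u x| < ε)
    (K : Set (Euc d)) (hK : IsCompact K)
    (U : Set (Euc d)) (hU : IsOpen U) (hKU : K ⊆ U) (hUΩ : closure U ⊆ Ω)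
    (hbc : ∀ hk : ℕ → ℝ, (∀ k, 0 < hk k) → Tendsto hk atTop (𝓝 0) →
      ∀ φ : ℕ → ℕ, StrictMono φ →
      ∀ z : ℕ → Euc d, (∀ j, z j ∈ meshΩ Ω (hk (φ j)) ∪ B (hk (φ j))) →
      ∀ z₀ ∈ frontier Ω, Tendsto z atTop (𝓝 z₀) →
        Filter.liminf (fun j => extFun Ω u (z j)) atTop ≤
          Filter.limsup (fun j => ((uh (hk (φ j)) (z j) : ℝ) : EReal)) atTop) :
    ∀ hk : ℕ → ℝ, (∀ k, 0 < hk k) → Tendsto hk atTop (𝓝 0) →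
    volume ((⋃ x ∈ K, subdiff Ω u x) \
      (⋃ n : ℕ, ⋂ k ∈ Ici n, ⋃ x ∈ U ∩ convexHull ℝ (meshΩ Ω (hk k) ∪ B (hk k)),
        subdiff (convexHull ℝ (meshΩ Ω (hk k) ∪ B (hk k)))
          (convEnv (meshΩ Ω (hk k) ∪ B (hk k)) (uh (hk k))) x)) = 0 :=
  statement12_general Ω hne hbd hop B hB u huc hucv uh hcvg K U hU hKU hUΩ hbc
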